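/- For τ ∈ (0,1) and 0 < ε ≤ (1/2)·min(τ,1-τ), the capacity C_{τ,ε} of the binary asymmetric channel satisfies C_{τ,ε} ≤ ε²/(ln 2·τ·(1-τ)). -/

import Mathlib

noncomputable def binEntropy (x : ℝ) : ℝ :=
  -(x * Real.logb 2 x) - (1 - x) * Real.logb 2 (1 - x)

noncomputable def capacity (τ ε : ℝ) : ℝ :=
  sSup {y | ∃ q ∈ Set.Icc (0 : ℝ) 1,
    y = binEntropy ((1 - q) * (τ - ε) + q * (τ + ε))
        - (1 - q) * binEntropy (τ - ε) - q * binEntropy (τ + ε)}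

/-!
Write `H` for the entropy in nats. On `[τ - ε, τ + ε]` one has `x (1 - x) ≥ τ (1 - τ) / 2`, so
`H'' = -1 / (x (1 - x)) ≥ -2c` with `c = 1 / (τ (1 - τ))`, i.e. `H + c x²` is convex there.
Jensen's inequality for `H + c x²` bounds the Jensen gap of `H` at the endpoints by
`c q (1 - q) (2ε)² ≤ c ε²`; dividing by `Real.log 2` converts nats to bits.
-/

open Set

lemma binEntropy_eq_binEntropy_div_log_two (x : ℝ) :
    binEntropy x = Real.binEntropy x / Real.log 2 := by
  simp only [binEntropy, Real.binEntropy, Real.log_inv]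
  unfold Real.logb
  ring

lemma ConvexOn.jensen_gap_le_of_add_mul_sq {s : Set ℝ} {f : ℝ → ℝ} {a b c q : ℝ}
    (hf : ConvexOn ℝ s fun x => f x + c * x ^ 2) (ha : a ∈ s) (hb : b ∈ s)
    (hq₀ : 0 ≤ q) (hq₁ : q ≤ 1) :
    f ((1 - q) * a + q * b) - (1 - q) * f a - q * f b ≤ c * (q * (1 - q)) * (b - a) ^ 2 := by
  have h := hf.2 ha hb (sub_nonneg.2 hq₁) hq₀ (sub_add_cancel 1 q)
  simp only [smul_eq_mul] at h
  linear_combination h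

lemma convexOn_binEntropy_add_mul_sq {a b c : ℝ} (ha : 0 < a) (hb : b < 1)
    (hc : ∀ x ∈ Ioo a b, (x * (1 - x))⁻¹ ≤ 2 * c) :
    ConvexOn ℝ (Icc a b) fun x => Real.binEntropy x + c * x ^ 2 := by
  refine convexOn_of_hasDerivWithinAt2_nonneg
    (f' := fun x => Real.log (1 - x) - Real.log x + c * (2 * x))
    (f'' := fun x => -(x * (1 - x))⁻¹ + c * 2) (convex_Icc a b) (by fun_prop) ?_ ?_ ?_
  all_goals
    intro x hx
    rw [interior_Icc] at hx
    have hx₀ : x ≠ 0 := by linarith [hx.1]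
    have hx₁ : 1 - x ≠ 0 := by linarith [hx.2]
  · exact ((Real.hasDerivAt_binEntropy hx₀ (by grind)).add
      ((hasDerivAt_pow 2 x).const_mul c |>.congr_deriv (by ring))).hasDerivWithinAt
  · have h := (((hasDerivAt_id x).const_sub 1).log hx₁).sub (Real.hasDerivAt_log hx₀)
      |>.add (((hasDerivAt_id x).const_mul 2).const_mul c)
    refine (h.congr_deriv ?_).hasDerivWithinAt
    simp only [id]
    field_simp
    ring
  · linarith [hc x hx]

lemma mul_one_sub_le_two_mul_mul_one_sub {τ ε x : ℝ} (hτ : 2 * ε ≤ τ) (hτ' : 2 * ε ≤ 1 - τ)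
    (hx : x ∈ Icc (τ - ε) (τ + ε)) : τ * (1 - τ) ≤ 2 * (x * (1 - x)) := by
  obtain ⟨hlo, hhi⟩ := hx
  rcases le_total x τ with h | h <;> nlinarith

lemma convexOn_binEntropy_add_inv_mul_sq {τ ε : ℝ} (hτ₀ : 0 < τ) (hτ₁ : τ < 1)
    (hετ : 2 * ε ≤ τ) (hετ' : 2 * ε ≤ 1 - τ) :
    ConvexOn ℝ (Icc (τ - ε) (τ + ε)) fun x => Real.binEntropy x + (τ * (1 - τ))⁻¹ * x ^ 2 := by
  refine convexOn_binEntropy_add_mul_sq (by linarith) (by linarith) fun x hx => ?_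
  have hx := mul_one_sub_le_two_mul_mul_one_sub hετ hετ' (Ioo_subset_Icc_self hx)
  have hτ : 0 < τ * (1 - τ) := mul_pos hτ₀ (by linarith)
  calc (x * (1 - x))⁻¹ ≤ (τ * (1 - τ) / 2)⁻¹ := inv_anti₀ (by positivity) (by linarith)
    _ = 2 * (τ * (1 - τ))⁻¹ := by field_simp

theorem capacity_upper_bound (τ ε : ℝ) (hτ0 : 0 < τ) (hτ1 : τ < 1)
    (hε0 : 0 < ε) (hε : ε ≤ (1/2) * min τ (1 - τ)) :
    capacity τ ε ≤ ε ^ 2 / (Real.log 2 * τ * (1 - τ)) := by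
  have hετ : 2 * ε ≤ τ := by linarith [min_le_left τ (1 - τ)]
  have hετ' : 2 * ε ≤ 1 - τ := by linarith [min_le_right τ (1 - τ)]
  refine Real.sSup_le ?_ (by positivity)
  rintro _ ⟨q, ⟨hq₀, hq₁⟩, rfl⟩
  have hgap := (convexOn_binEntropy_add_inv_mul_sq hτ0 hτ1 hετ hετ').jensen_gap_le_of_add_mul_sq
    (a := τ - ε) (b := τ + ε) ⟨le_rfl, by linarith⟩ ⟨by linarith, le_rfl⟩ hq₀ hq₁
  have hweight : q * (1 - q) * (τ + ε - (τ - ε)) ^ 2 ≤ ε ^ 2 := by nlinarith [sq_nonneg (2 * q - 1)]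
  simp only [binEntropy_eq_binEntropy_div_log_two]
  calc _ = (Real.binEntropy ((1 - q) * (τ - ε) + q * (τ + ε)) - (1 - q) * Real.binEntropy (τ - ε)
          - q * Real.binEntropy (τ + ε)) / Real.log 2 := by ring
    _ ≤ (τ * (1 - τ))⁻¹ * ε ^ 2 / Real.log 2 := by
      gcongr
      exact hgap.trans (by rw [mul_assoc]; gcongr)
    _ = ε ^ 2 / (Real.log 2 * τ * (1 - τ)) := by field_simp
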